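/- Let n ≥ 1 and let C : Fin n → Fin n → Bool satisfy C j k = C k j for all j, k and C j j = false. Then for all j, k : Fin n, Z_k * S_j * Z_k = S_j when j ≠ k, and Z_k * S_k * Z_k = −S_k. (Conjugating a stabilizing operator of a graph state by a local Pauli-Z flips the sign of exactly the stabilizing operator at that site: Z^{(k)} S^{(j)} Z^{(k)} = (1 − 2δ_{jk}) S^{(j)}.) -/

import Mathlib

/-! The tensor product `tensor` is multiplicative factor by factor, so conjugating a
Pauli string by `Zop k` conjugates its `k`-th factor by `pauliZ` and leaves the others alone.
Since `pauliZ` commutes with `1` and with itself but anticommutes with `pauliX`, only the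
stabilizing operator whose `k`-th factor is `pauliX`, namely `stab C k`, changes sign. -/

open Matrix BigOperators

noncomputable section

/-- Pauli X matrix. -/
def pauliX : Matrix (Fin 2) (Fin 2) ℂ := !![0, 1; 1, 0]

/-- Pauli Z matrix. -/
def pauliZ : Matrix (Fin 2) (Fin 2) ℂ := !![1, 0; 0, -1]

/-- n-fold tensor (Kronecker) product of a family of 2×2 matrices,
defined entrywise by `T(A) f g = ∏ j, (A j) (f j) (g j)`. -/
def tensor {n : ℕ} (A : Fin n → Matrix (Fin 2) (Fin 2) ℂ) :
    Matrix (Fin n → Fin 2) (Fin n → Fin 2) ℂ :=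
  Matrix.of fun f g => ∏ j, A j (f j) (g j)

/-- The stabilizing operator S_j = X^{(j)} ∏ₖ (Z^{(k)})^{C j k} of the graph
state with adjacency matrix C. -/
def stab {n : ℕ} (C : Fin n → Fin n → Bool) (j : Fin n) :
    Matrix (Fin n → Fin 2) (Fin n → Fin 2) ℂ :=
  tensor (fun k => if k = j then pauliX else if C j k then pauliZ else 1)

/-- The local Pauli-Z operator Z_k acting on the k-th qubit. -/
def Zop {n : ℕ} (k : Fin n) :
    Matrix (Fin n → Fin 2) (Fin n → Fin 2) ℂ :=
  tensor (fun m => if m = k then pauliZ else 1)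

theorem pauliZ_mul_pauliZ : pauliZ * pauliZ = 1 := by
  ext a b; fin_cases a <;> fin_cases b <;> simp [pauliZ]

theorem pauliZ_mul_pauliX_mul_pauliZ : pauliZ * pauliX * pauliZ = -pauliX := by
  ext a b; fin_cases a <;> fin_cases b <;> simp [pauliZ, pauliX]

theorem tensor_mul {n : ℕ} (A B : Fin n → Matrix (Fin 2) (Fin 2) ℂ) :
    tensor A * tensor B = tensor (A * B) := by
  ext f g
  simp only [tensor, mul_apply, of_apply, Pi.mul_apply, Fintype.prod_sum, Finset.prod_mul_distrib]

theorem tensor_update_smul {n : ℕ} (A : Fin n → Matrix (Fin 2) (Fin 2) ℂ) (k : Fin n) (c : ℂ) :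
    tensor (Function.update A k (c • A k)) = c • tensor A := by
  ext f g
  simp only [tensor, of_apply, Matrix.smul_apply, smul_eq_mul]
  rw [← Finset.mul_prod_erase _ _ (Finset.mem_univ k), ← Finset.mul_prod_erase _ _ (Finset.mem_univ k),
    Function.update_self, Matrix.smul_apply, smul_eq_mul, mul_assoc]
  congr 2
  refine Finset.prod_congr rfl fun m hm => ?_
  rw [Function.update_of_ne (Finset.ne_of_mem_erase hm)]

theorem Zop_mul_tensor_mul_Zop {n : ℕ} (k : Fin n) (A : Fin n → Matrix (Fin 2) (Fin 2) ℂ) :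
    Zop k * tensor A * Zop k = tensor (Function.update A k (pauliZ * A k * pauliZ)) := by
  rw [Zop, tensor_mul, tensor_mul]
  congr 1
  ext1 m
  by_cases hm : m = k
  · subst hm; simp
  · simp [hm]

theorem Zop_mul_tensor_mul_Zop_of_commute {n : ℕ} {k : Fin n} {A : Fin n → Matrix (Fin 2) (Fin 2) ℂ}
    (h : Commute pauliZ (A k)) : Zop k * tensor A * Zop k = tensor A := by
  rw [Zop_mul_tensor_mul_Zop, h.eq, mul_assoc, pauliZ_mul_pauliZ, mul_one, Function.update_eq_self]

theorem Zop_mul_tensor_mul_Zop_of_eq_pauliX {n : ℕ} {k : Fin n}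
    {A : Fin n → Matrix (Fin 2) (Fin 2) ℂ} (h : A k = pauliX) :
    Zop k * tensor A * Zop k = -tensor A := by
  rw [Zop_mul_tensor_mul_Zop, h, pauliZ_mul_pauliX_mul_pauliZ, ← neg_one_smul ℂ pauliX, ← h,
    tensor_update_smul, neg_one_smul]

theorem zop_conj_stab (n : ℕ) (C : Fin n → Fin n → Bool) :
    (∀ j k : Fin n, j ≠ k → Zop k * stab C j * Zop k = stab C j) ∧
    (∀ k : Fin n, Zop k * stab C k * Zop k = -(stab C k)) := by
  refine ⟨fun j k hjk => Zop_mul_tensor_mul_Zop_of_commute ?_,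
    fun k => Zop_mul_tensor_mul_Zop_of_eq_pauliX (if_pos rfl)⟩
  show Commute pauliZ (if k = j then pauliX else if C j k then pauliZ else 1)
  rw [if_neg hjk.symm]
  split <;> simp
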